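/- Let w and ε be real numbers with 0 < ε < w and w ≥ 1. Consider the instance with two jobs j_1 and j_2, both of processing time 1, with w_1 = a_1 = w and w_2 = a_2 = w − ε, and two supplies: quantity b̃_1 = w − ε at u_1 = 0 and quantity b̃_2 = w at u_2 = w. Then: (a) the schedule produced by list scheduling in non-increasing weight order starts j_1 at time w and j_2 at time w + 1, is feasible, and has total weighted completion time (w+1)·w + (w+2)·(w − ε) = 2w² + 3w − ε(w + 2); (b) the schedule starting j_2 at time 0 and j_1 at time w is feasible and has total weighted completion time (w − ε) + (w + 1)·w = w² + 2w − ε. Consequently, the ratio between the list schedule's objective value and the optimum is at least (2w² + 3w − ε(w+2)) / (w² + 2w − ε), which tends to 2 as w → ∞. -/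

import Mathlib

open Classical

/-- Cumulative supply over the first `ℓ+1` supplies (0-based indexing of supplies). -/
noncomputable def cumSupply (btilde : ℕ → ℝ) (ℓ : ℕ) : ℝ :=
  ∑ k ∈ Finset.range (ℓ + 1), btilde k

/-- List schedule in job order `0, 1, …` for unit processing times and resource
requirements `a_j = w_j`: job `j` starts at the maximum of the previous job's
completion time and `u (ℓ(j))`, where `ℓ(j)` is the first supply period whose
cumulative supply covers the total weight of the first `j+1` jobs. -/
noncomputable def wListSched (w u btilde : ℕ → ℝ) : ℕ → ℝ
  | 0 => u (sInf {ℓ : ℕ | w 0 ≤ cumSupply btilde ℓ})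
  | (j + 1) => max (wListSched w u btilde j + 1)
      (u (sInf {ℓ : ℕ | ∑ j' ∈ Finset.range (j + 2), w j' ≤ cumSupply btilde ℓ}))

/-- Feasibility of a schedule `S` of `n` unit-time jobs (indexed `0, …, n-1`) with
resource requirements equal to the weights `w`, and `q` supplies at dates
`u 0 < u 1 < …` delivering `btilde` units. -/
def FeasibleW (n q : ℕ) (w u btilde : ℕ → ℝ) (S : ℕ → ℝ) : Prop :=
  (∀ j, j < n → 0 ≤ S j) ∧
  (∀ j, j < n → ∀ j', j' < n → j ≠ j' → S j + 1 ≤ S j' ∨ S j' + 1 ≤ S j) ∧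
  (∀ t : ℝ, 0 ≤ t → ∀ ℓ, ℓ < q → u ℓ ≤ t →
    (∀ ℓ', ℓ' < q → u ℓ' ≤ t → ℓ' ≤ ℓ) →
    ∑ j ∈ (Finset.range n).filter (fun j => S j ≤ t), w j ≤ cumSupply btilde ℓ)

/-! The heavier job alone already exceeds the first supply, so list scheduling idles until the
second supply arrives at time `w` and then runs both jobs; starting the lighter job first uses the
idle time. The two objective values are quadratics in `w` with leading coefficients `2` and `1`,
so their ratio tends to `2`. -/

open Filter Topology Polynomial

lemma Nat.sInf_eq_one {s : Set ℕ} (h1 : 1 ∈ s) (h0 : 0 ∉ s) : sInf s = 1 :=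
  le_antisymm (Nat.sInf_le h1) <| Nat.one_le_iff_ne_zero.2 fun h =>
    (Nat.sInf_eq_zero.1 h).elim h0 fun he => by simp [he] at h1

lemma tendsto_quadratic_div_quadratic {a d : ℝ} (b c e f : ℝ) (ha : a ≠ 0) (hd : d ≠ 0) :
    Tendsto (fun x => (a * x ^ 2 + b * x + c) / (d * x ^ 2 + e * x + f)) atTop (𝓝 (a / d)) := by
  have h := div_tendsto_atTop_leadingCoeff_div_of_degree_eq
    (P := C a * X ^ 2 + C b * X + C c) (Q := C d * X ^ 2 + C e * X + C f)
    (by rw [degree_quadratic ha, degree_quadratic hd])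
  simpa [leadingCoeff_quadratic ha, leadingCoeff_quadratic hd] using h

lemma cumSupply_zero (b : ℕ → ℝ) : cumSupply b 0 = b 0 := by
  simp [cumSupply]

lemma cumSupply_one (b : ℕ → ℝ) : cumSupply b 1 = b 0 + b 1 := by
  simp [cumSupply, Finset.sum_range_succ]

section TwoSupplies

variable {w u b : ℕ → ℝ}

lemma sInf_setOf_le_cumSupply_eq_one {x : ℝ} (h0 : cumSupply b 0 < x) (h1 : x ≤ cumSupply b 1) :
    sInf {ℓ : ℕ | x ≤ cumSupply b ℓ} = 1 :=
  Nat.sInf_eq_one h1 (not_le.2 h0)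

lemma wListSched_zero_eq_of_cover (h0 : cumSupply b 0 < w 0) (h1 : w 0 ≤ cumSupply b 1) :
    wListSched w u b 0 = u 1 := by
  rw [wListSched, sInf_setOf_le_cumSupply_eq_one h0 h1]

lemma wListSched_one_eq_of_cover (h0 : cumSupply b 0 < w 0) (h1 : w 0 + w 1 ≤ cumSupply b 1)
    (hw1 : 0 ≤ w 1) : wListSched w u b 1 = u 1 + 1 := by
  have hsum : ∑ j ∈ Finset.range 2, w j = w 0 + w 1 := by simp [Finset.sum_range_succ]
  rw [wListSched, wListSched_zero_eq_of_cover h0 (by linarith),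
    sInf_setOf_le_cumSupply_eq_one (by linarith) (by linarith)]
  exact max_eq_left (by linarith)

lemma feasibleW_two_supplies {n : ℕ} {S : ℕ → ℝ} (hS : ∀ j < n, 0 ≤ S j)
    (hdisj : ∀ j < n, ∀ j' < n, j ≠ j' → S j + 1 ≤ S j' ∨ S j' + 1 ≤ S j)
    (hw : ∀ j < n, 0 ≤ w j)
    (hearly : ∑ j ∈ (Finset.range n).filter (fun j => S j < u 1), w j ≤ cumSupply b 0)
    (htotal : ∑ j ∈ Finset.range n, w j ≤ cumSupply b 1) :
    FeasibleW n 2 w u b S := by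
  refine ⟨hS, hdisj, fun t _ ℓ hℓ _ hmax => ?_⟩
  interval_cases ℓ
  · have ht : t < u 1 := not_le.1 fun h => absurd (hmax 1 one_lt_two h) (by norm_num)
    refine le_trans (Finset.sum_le_sum_of_subset_of_nonneg ?_ ?_) hearly
    · exact Finset.monotone_filter_right _ fun j _ (h : S j ≤ t) => h.trans_lt ht
    · intro j hj _
      exact hw j (Finset.mem_range.1 (Finset.mem_of_mem_filter j hj))
  · refine le_trans (Finset.sum_le_sum_of_subset_of_nonneg (Finset.filter_subset _ _) ?_) htotal
    exact fun j hj _ => hw j (Finset.mem_range.1 hj)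

end TwoSupplies

lemma disjoint_unit_intervals_two {S : ℕ → ℝ} (h : S 0 + 1 ≤ S 1 ∨ S 1 + 1 ≤ S 0) :
    ∀ j < 2, ∀ j' < 2, j ≠ j' → S j + 1 ≤ S j' ∨ S j' + 1 ≤ S j := by
  intro j hj j' hj' hne
  interval_cases j <;> interval_cases j' <;> tauto

/-- Tight example for the 2-approximation with two supplies.
Two unit-time jobs with `w_0 = a_0 = w` and `w_1 = a_1 = w - ε` (`0 < ε < w`,
`w ≥ 1`), supplies `b̃_1 = w - ε` at `u_1 = 0` and `b̃_2 = w` at `u_2 = w`.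
(a) List scheduling in non-increasing weight order starts job `0` at `w` and job `1`
at `w + 1`; this schedule is feasible and has total weighted completion time
`(w+1)·w + (w+2)·(w-ε) = 2w² + 3w - ε(w+2)`.
(b) Starting job `1` at `0` and job `0` at `w` is feasible with total weighted
completion time `(w-ε) + (w+1)·w = w² + 2w - ε`.
Consequently the ratio `(2w² + 3w - ε(w+2)) / (w² + 2w - ε)` tends to `2`
as `w → ∞`. -/
theorem tight_example_two_supplies (w ε : ℝ) (hε : 0 < ε) (hεw : ε < w) (hw : 1 ≤ w) :
    (wListSched (fun j => if j = 0 then w else w - ε)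
        (fun ℓ => if ℓ = 0 then 0 else w)
        (fun ℓ => if ℓ = 0 then w - ε else w) 0 = w ∧
      wListSched (fun j => if j = 0 then w else w - ε)
        (fun ℓ => if ℓ = 0 then 0 else w)
        (fun ℓ => if ℓ = 0 then w - ε else w) 1 = w + 1) ∧
    (FeasibleW 2 2 (fun j => if j = 0 then w else w - ε)
        (fun ℓ => if ℓ = 0 then 0 else w)
        (fun ℓ => if ℓ = 0 then w - ε else w)
        (fun j => if j = 0 then w else w + 1) ∧
      ∑ j ∈ Finset.range 2,
          (if j = 0 then w else w - ε) * ((if j = 0 then w else w + 1) + 1) =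
        2 * w ^ 2 + 3 * w - ε * (w + 2)) ∧
    (FeasibleW 2 2 (fun j => if j = 0 then w else w - ε)
        (fun ℓ => if ℓ = 0 then 0 else w)
        (fun ℓ => if ℓ = 0 then w - ε else w)
        (fun j => if j = 0 then w else 0) ∧
      ∑ j ∈ Finset.range 2,
          (if j = 0 then w else w - ε) * ((if j = 0 then w else 0) + 1) =
        w ^ 2 + 2 * w - ε) ∧
    Filter.Tendsto
      (fun W : ℝ => (2 * W ^ 2 + 3 * W - ε * (W + 2)) / (W ^ 2 + 2 * W - ε))
      Filter.atTop (nhds 2) := by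
  have hweights : ∀ j < 2, 0 ≤ (if j = 0 then w else w - ε) := fun j _ => by
    split_ifs <;> linarith
  have htotal : ∑ j ∈ Finset.range 2, (if j = 0 then w else w - ε) ≤
      cumSupply (fun ℓ => if ℓ = 0 then w - ε else w) 1 := by
    simp [Finset.sum_range_succ, cumSupply_one]; linarith
  refine ⟨⟨?_, ?_⟩, ⟨?_, ?_⟩, ⟨?_, ?_⟩, ?_⟩
  · exact wListSched_zero_eq_of_cover (by simp [cumSupply_zero]; linarith)
      (by simp [cumSupply_one]; linarith)
  · exact wListSched_one_eq_of_cover (by simp [cumSupply_zero]; linarith)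
      (by simp [cumSupply_one]; linarith) (by simp; linarith)
  · refine feasibleW_two_supplies (fun j _ => ?_) (disjoint_unit_intervals_two (Or.inl le_rfl))
      hweights ?_ htotal
    · split_ifs <;> linarith
    · norm_num [Finset.sum_filter, Finset.sum_range_succ, cumSupply_zero]; linarith
  · simp [Finset.sum_range_succ]; ring
  · refine feasibleW_two_supplies (fun j _ => ?_) (disjoint_unit_intervals_two (Or.inr (by simpa)))
      hweights ?_ htotal
    · split_ifs <;> linarith
    · norm_num [Finset.sum_filter, Finset.sum_range_succ, cumSupply_zero, hε.trans hεw]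
  · simp [Finset.sum_range_succ]; ring
  · have h := tendsto_quadratic_div_quadratic (3 - ε) (-2 * ε) 2 (-ε) two_ne_zero one_ne_zero
    rw [div_one] at h
    exact h.congr fun W => by ring
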